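/- Let G = (X, Y, E) be a finite connected bipartite permutation graph and let vw ∈ E with v ∈ X and w ∈ Y. Then every ordered longest path of G contains v or w. -/

import Mathlib

/-!
Vertices are segments joining their points on the two lines, and distinct vertices are adjacent
exactly when their segments cross, i.e. when neither lies to the left of the other
(`LineRep.LeftOf`). On an ordered path the vertices of each side move strictly to the right, so
the edges zigzag; after possibly exchanging the two lines, the edges leaving the vertices of a
chosen side all run rightwards on the top line.

Suppose an ordered longest path `P` misses both `v` and `w`. By connectivity some edge `cd` off
`P` has `c` adjacent to `P`. Maximality forbids `c` to be adjacent to the first two or the last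
two vertices of `P`, and forbids inserting `cd` between two consecutive vertices of `P`. Moving
outwards from a neighbour of `c` on `P` one finds vertices of `P` on the side of `c` to its left
and to its right, hence two consecutive ones with `P l` left of `c` left of `P (l + 2)`. Then `c`
crosses `P (l + 1)`, so `d` is adjacent to neither `P l` nor `P (l + 2)`, which puts `d` between
them as well; but then `d` crosses `P (l + 1)`, a vertex of its own side.
-/

open SimpleGraph

/-- `p` is a longest path of `G`: it is a path, and no path of `G` is longer. -/
def IsLongestPath {V : Type*} (G : SimpleGraph V) {u v : V} (p : G.Walk u v) : Prop :=
  p.IsPath ∧ ∀ ⦃a b : V⦄ (q : G.Walk a b), q.IsPath → q.length ≤ p.length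

/-- A line representation of a bipartite graph `G` on `Fin n ⊕ Fin m` (left part
`X = {x_1 < ⋯ < x_n}`, right part `Y = {y_1 < ⋯ < y_m}`), witnessing that `G` is a
bipartite permutation graph: points `r i` (for `x i`) and `s j` (for `y j`) on a first
line, and points `σr i`, `σs j` on a second line, strictly increasing on each part and
pairwise distinct across parts, such that `x i` and `y j` are adjacent iff the
corresponding segments cross, i.e. `(r i - s j) * (σr i - σs j) < 0`; there are no edges
within `X` nor within `Y`. -/
structure LineRep (n m : ℕ) (G : SimpleGraph (Fin n ⊕ Fin m)) where
  r : Fin n → ℝ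
  s : Fin m → ℝ
  σr : Fin n → ℝ
  σs : Fin m → ℝ
  r_mono : StrictMono r
  s_mono : StrictMono s
  σr_mono : StrictMono σr
  σs_mono : StrictMono σs
  top_distinct : ∀ i j, r i ≠ s j
  bot_distinct : ∀ i j, σr i ≠ σs j
  adj_iff : ∀ i j, G.Adj (Sum.inl i) (Sum.inr j) ↔ (r i - s j) * (σr i - σs j) < 0
  no_left : ∀ i i', ¬ G.Adj (Sum.inl i) (Sum.inl i')
  no_right : ∀ j j', ¬ G.Adj (Sum.inr j) (Sum.inr j')

/-- A path in a bipartite graph on `Fin n ⊕ Fin m` is ordered if its vertices alternate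
between the two parts and, within each part, appear in strictly increasing index order.
-/
def OrderedWalk {n m : ℕ} (G : SimpleGraph (Fin n ⊕ Fin m)) {u v : Fin n ⊕ Fin m}
    (p : G.Walk u v) : Prop :=
  List.Chain' (fun a b : Fin n ⊕ Fin m => a.isLeft ≠ b.isLeft) p.support ∧
  (p.support.filterMap Sum.getLeft?).Pairwise (· < ·) ∧
  (p.support.filterMap Sum.getRight?).Pairwise (· < ·)


namespace LineRep

variable {n m : ℕ} {G : SimpleGraph (Fin n ⊕ Fin m)} (rep : LineRep n m G)

def top : Fin n ⊕ Fin m → ℝ := Sum.elim rep.r rep.s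

def bot : Fin n ⊕ Fin m → ℝ := Sum.elim rep.σr rep.σs

def swap : LineRep n m G where
  r := rep.σr
  s := rep.σs
  σr := rep.r
  σs := rep.s
  r_mono := rep.σr_mono
  s_mono := rep.σs_mono
  σr_mono := rep.r_mono
  σs_mono := rep.s_mono
  top_distinct := rep.bot_distinct
  bot_distinct := rep.top_distinct
  adj_iff i j := by rw [rep.adj_iff, mul_comm]
  no_left := rep.no_left
  no_right := rep.no_right

@[simp] lemma top_swap : rep.swap.top = rep.bot := rfl

def LeftOf (a b : Fin n ⊕ Fin m) : Prop := rep.top a < rep.top b ∧ rep.bot a < rep.bot b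

variable {a b c : Fin n ⊕ Fin m}

lemma LeftOf.trans {rep : LineRep n m G} (hab : rep.LeftOf a b) (hbc : rep.LeftOf b c) :
    rep.LeftOf a c :=
  ⟨hab.1.trans hbc.1, hab.2.trans hbc.2⟩

lemma LeftOf.not_leftOf {rep : LineRep n m G} (hab : rep.LeftOf a b) : ¬ rep.LeftOf b a :=
  fun hba => hab.1.not_gt hba.1

lemma isLeft_ne_of_adj (rep : LineRep n m G) (h : G.Adj a b) : a.isLeft ≠ b.isLeft := by
  rcases a with i | j <;> rcases b with i' | j'
  exacts [absurd h (rep.no_left i i'), by simp, by simp, absurd h (rep.no_right j j')]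

lemma top_ne (h : a.isLeft ≠ b.isLeft) : rep.top a ≠ rep.top b := by
  rcases a with i | j <;> rcases b with i' | j'
  exacts [absurd rfl h, rep.top_distinct i j', (rep.top_distinct i' j).symm, absurd rfl h]

lemma bot_ne (h : a.isLeft ≠ b.isLeft) : rep.bot a ≠ rep.bot b :=
  rep.swap.top_ne h

lemma leftOf_or_leftOf_of_isLeft_eq (h : a.isLeft = b.isLeft) (hab : a ≠ b) :
    rep.LeftOf a b ∨ rep.LeftOf b a := by
  rcases a with i | j <;> rcases b with i' | j' <;> simp only [Sum.isLeft_inl,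
    Sum.isLeft_inr, Bool.true_eq_false, Bool.false_eq_true, ne_eq, Sum.inl.injEq,
    Sum.inr.injEq] at h hab ⊢
  · rcases lt_or_gt_of_ne hab with hi | hi
    exacts [.inl ⟨rep.r_mono hi, rep.σr_mono hi⟩, .inr ⟨rep.r_mono hi, rep.σr_mono hi⟩]
  · rcases lt_or_gt_of_ne hab with hj | hj
    exacts [.inl ⟨rep.s_mono hj, rep.σs_mono hj⟩, .inr ⟨rep.s_mono hj, rep.σs_mono hj⟩]

lemma adj_iff_not_leftOf (hab : a ≠ b) :
    G.Adj a b ↔ ¬ rep.LeftOf a b ∧ ¬ rep.LeftOf b a := by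
  by_cases hside : a.isLeft = b.isLeft
  · have := rep.leftOf_or_leftOf_of_isLeft_eq hside hab
    have := mt rep.isLeft_ne_of_adj (not_not.2 hside)
    tauto
  have key : ∀ i j, G.Adj (Sum.inl i) (Sum.inr j) ↔
      ¬ rep.LeftOf (Sum.inl i) (Sum.inr j) ∧ ¬ rep.LeftOf (Sum.inr j) (Sum.inl i) := by
    intro i j
    have ht := rep.top_distinct i j
    have hb := rep.bot_distinct i j
    simp only [rep.adj_iff, LeftOf, top, bot, Sum.elim_inl, Sum.elim_inr, mul_neg_iff,
      sub_pos, sub_neg]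
    rcases lt_or_gt_of_ne ht with ht | ht <;> rcases lt_or_gt_of_ne hb with hb | hb <;>
      simp [ht, hb, ht.not_gt, hb.not_gt]
  rcases a with i | j <;> rcases b with i' | j'
  · exact absurd rfl hside
  · exact key i j'
  · rw [G.adj_comm, key i' j]; tauto
  · exact absurd rfl hside

lemma top_lt_iff_bot_lt_of_adj (h : G.Adj a b) :
    rep.top a < rep.top b ↔ rep.bot b < rep.bot a := by
  have hcross := (rep.adj_iff_not_leftOf h.ne).1 h
  have ht := rep.top_ne (rep.isLeft_ne_of_adj h)
  have hb := rep.bot_ne (rep.isLeft_ne_of_adj h)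
  unfold LeftOf at hcross
  constructor <;> intro h'
  · exact lt_of_le_of_ne (not_lt.1 fun h'' => hcross.1 ⟨h', h''⟩) hb.symm
  · exact lt_of_le_of_ne (not_lt.1 fun h'' => hcross.2 ⟨h'', h'⟩) ht

lemma not_top_lt_top_iff_of_adj (h : G.Adj a b) :
    ¬ rep.top a < rep.top b ↔ rep.top b < rep.top a :=
  ⟨fun h' => lt_of_le_of_ne (not_lt.1 h') (rep.top_ne (rep.isLeft_ne_of_adj h)).symm,
    fun h' => h'.not_gt⟩

lemma leftOf_or_leftOf_of_not_adj (hab : a ≠ b) (h : ¬ G.Adj a b) :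
    rep.LeftOf a b ∨ rep.LeftOf b a := by
  rw [rep.adj_iff_not_leftOf hab] at h
  tauto

lemma isLeft_eq_of_adj_of_adj (rep : LineRep n m G) (ha : G.Adj c a) (hb : G.Adj c b) :
    a.isLeft = b.isLeft := by
  have ha' := rep.isLeft_ne_of_adj ha
  have hb' := rep.isLeft_ne_of_adj hb
  revert ha' hb'
  cases a.isLeft <;> cases b.isLeft <;> cases c.isLeft <;> simp

end LineRep

namespace SimpleGraph.Walk

variable {V : Type*} {G : SimpleGraph V} {u v x y : V}

lemma exists_adj_adj_mem_of_notMem {s : Set V} {a b : V} (W : G.Walk a b)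
    (ha : a ∉ s) (hb : b ∈ s) {a' : V} (ha' : a' ∉ s) (h : G.Adj a' a) :
    ∃ x y, x ∉ s ∧ y ∉ s ∧ G.Adj x y ∧ ∃ z ∈ s, G.Adj y z := by
  induction W generalizing a' with
  | nil => exact absurd hb ha
  | @cons a c b hac W ih =>
    by_cases hc : c ∈ s
    · exact ⟨a', a, ha', ha, h, c, hc, hac⟩
    · exact ih hc hb ha hac

lemma ne_getVert_of_notMem {p : G.Walk u v} (hx : x ∉ p.support) (k : ℕ) :
    x ≠ p.getVert k :=
  fun h => hx (h ▸ p.getVert_mem_support k)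

lemma exists_support_perm_of_adj_getVert (p : G.Walk u v) (hxy : G.Adj x y)
    {k : ℕ} (hk : k < p.length) (hx : G.Adj (p.getVert k) x)
    (hy : G.Adj y (p.getVert (k + 1))) :
    ∃ q : G.Walk u v, q.support.Perm (x :: y :: p.support) := by
  induction p generalizing k with
  | nil => simp at hk
  | @cons a b c hab p ih =>
    cases k with
    | zero =>
      simp only [getVert_zero, getVert_cons_succ] at hx hy
      exact ⟨cons hx (cons hxy (cons hy p)), List.perm_middle (l₁ := [x, y]).symm⟩
    | succ k =>
      simp only [getVert_cons_succ, length_cons] at hx hy hk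
      obtain ⟨q, hq⟩ := ih (by omega) hx hy
      exact ⟨cons hab q, (hq.cons a).trans (List.perm_middle (l₁ := [x, y])).symm⟩

end SimpleGraph.Walk

namespace IsLongestPath

variable {V : Type*} {G : SimpleGraph V} {u v x y : V} {p : G.Walk u v}

lemma reverse (hp : IsLongestPath G p) : IsLongestPath G p.reverse :=
  ⟨hp.1.reverse, fun _ _ q hq => p.length_reverse ▸ hp.2 q hq⟩

lemma not_adj_start (hp : IsLongestPath G p) (hx : x ∉ p.support) : ¬ G.Adj x u := fun h => by
  simpa using hp.2 (.cons h p) (hp.1.cons hx)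

lemma not_adj_end (hp : IsLongestPath G p) (hx : x ∉ p.support) : ¬ G.Adj x v := by
  simpa using hp.reverse.not_adj_start (by simpa using hx)

lemma not_adj_getVert_one (hp : IsLongestPath G p) (hx : x ∉ p.support) (hy : y ∉ p.support)
    (hyx : G.Adj y x) : ¬ G.Adj x (p.getVert 1) := by
  cases p with
  | nil => exact hp.not_adj_start hx
  | @cons _ b _ hub q =>
    rw [Walk.getVert_cons_succ, Walk.getVert_zero]
    intro hxb
    simp only [Walk.support_cons, List.mem_cons, not_or] at hx hy
    have hq : q.IsPath := (Walk.cons_isPath_iff _ _).1 hp.1 |>.1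
    have hpath : (Walk.cons hyx (Walk.cons hxb q)).IsPath :=
      (hq.cons hx.2).cons (by simp [hyx.ne, hy.2])
    simpa using hp.2 _ hpath

lemma not_adj_getVert_length_sub_one (hp : IsLongestPath G p) (hx : x ∉ p.support)
    (hy : y ∉ p.support) (hyx : G.Adj y x) : ¬ G.Adj x (p.getVert (p.length - 1)) := by
  simpa [Walk.getVert_reverse] using
    hp.reverse.not_adj_getVert_one (by simpa using hx) (by simpa using hy) hyx

lemma not_adj_getVert_succ (hp : IsLongestPath G p) (hx : x ∉ p.support) (hy : y ∉ p.support)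
    (hxy : G.Adj x y) {k : ℕ} (hk : k < p.length) (hkx : G.Adj (p.getVert k) x) :
    ¬ G.Adj y (p.getVert (k + 1)) := fun hyk => by
  obtain ⟨q, hq⟩ := p.exists_support_perm_of_adj_getVert hxy hk hkx hyk
  have hpath : q.IsPath := by
    rw [Walk.isPath_def, hq.nodup_iff]
    simp [hx, hy, hxy.ne, hp.1.support_nodup]
  have hlen := hq.length_eq
  simp only [Walk.length_support, List.length_cons] at hlen
  have := hp.2 q hpath
  omega

end IsLongestPath

lemma iff_iff_iff_zero_of_alternating {P Q : ℕ → Prop} {L : ℕ}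
    (hP : ∀ k, k + 1 < L → (P (k + 1) ↔ ¬ P k))
    (hQ : ∀ k, k + 1 < L → (Q (k + 1) ↔ ¬ Q k)) :
    ∀ k < L, ((P k ↔ Q k) ↔ (P 0 ↔ Q 0)) := by
  intro k hk
  induction k with
  | zero => rfl
  | succ k ih =>
    rw [hP k hk, hQ k hk, ← ih (by omega)]
    tauto

namespace LineRep

variable {n m : ℕ} {G : SimpleGraph (Fin n ⊕ Fin m)} (rep : LineRep n m G)
  {u v c d : Fin n ⊕ Fin m} {p : G.Walk u v} {k : ℕ} {s : Bool}

lemma isLeft_getVert_succ (rep : LineRep n m G) (hk : k < p.length) (s : Bool) :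
    (p.getVert (k + 1)).isLeft = s ↔ (p.getVert k).isLeft ≠ s := by
  have := rep.isLeft_ne_of_adj (p.adj_getVert_succ hk)
  revert this
  cases (p.getVert k).isLeft <;> cases (p.getVert (k + 1)).isLeft <;> cases s <;> simp

lemma isLeft_getVert_add_two (rep : LineRep n m G) (hk : k + 2 ≤ p.length) :
    (p.getVert (k + 2)).isLeft = (p.getVert k).isLeft :=
  rep.isLeft_eq_of_adj_of_adj (p.adj_getVert_succ (i := k + 1) (by omega))
    (p.adj_getVert_succ (i := k) (by omega)).symm

lemma leftOf_getVert (hord : OrderedWalk G p) {l : ℕ} (hkl : k < l) (hl : l ≤ p.length)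
    (hside : (p.getVert k).isLeft = (p.getVert l).isLeft) :
    rep.LeftOf (p.getVert k) (p.getVert l) := by
  have hl' : l < p.support.length := by rw [p.length_support]; omega
  have hX := List.pairwise_iff_getElem.1 (List.pairwise_filterMap.1 hord.2.1) k l (by omega)
    hl' hkl
  have hY := List.pairwise_iff_getElem.1 (List.pairwise_filterMap.1 hord.2.2) k l (by omega)
    hl' hkl
  simp only [p.support_getElem_eq_getVert] at hX hY
  generalize p.getVert k = x, p.getVert l = y at *
  rcases x with i | j <;> rcases y with i' | j' <;>
    simp only [Sum.isLeft_inl, Sum.isLeft_inr, Bool.true_eq_false, Bool.false_eq_true] at hside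
  · have hi := hX i rfl i' rfl
    exact ⟨rep.r_mono hi, rep.σr_mono hi⟩
  · have hj := hY j rfl j' rfl
    exact ⟨rep.s_mono hj, rep.σs_mono hj⟩

lemma leftOf_getVert_add_two (hord : OrderedWalk G p) (hk : k + 2 ≤ p.length) :
    rep.LeftOf (p.getVert k) (p.getVert (k + 2)) :=
  rep.leftOf_getVert hord (by omega) hk (rep.isLeft_getVert_add_two hk).symm

lemma top_getVert_succ_lt_iff (hord : OrderedWalk G p) (hk : k + 2 ≤ p.length) :
    rep.top (p.getVert (k + 1)) < rep.top (p.getVert (k + 2)) ↔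
      ¬ rep.top (p.getVert k) < rep.top (p.getVert (k + 1)) := by
  have h₀ := p.adj_getVert_succ (i := k) (by omega)
  have h₁ := p.adj_getVert_succ (i := k + 1) (by omega)
  have hlt := rep.leftOf_getVert_add_two hord hk
  constructor
  · intro h₁₂ h₀₁
    rw [rep.top_lt_iff_bot_lt_of_adj h₀] at h₀₁
    rw [rep.top_lt_iff_bot_lt_of_adj h₁] at h₁₂
    exact (h₁₂.trans h₀₁).not_gt hlt.2
  · intro h₀₁
    by_contra h₁₂
    rw [rep.not_top_lt_top_iff_of_adj h₀] at h₀₁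
    rw [rep.not_top_lt_top_iff_of_adj h₁] at h₁₂
    exact (h₁₂.trans h₀₁).not_gt hlt.1

def Oriented (p : G.Walk u v) (s : Bool) : Prop :=
  ∀ k < p.length,
    ((p.getVert k).isLeft = s ↔ rep.top (p.getVert k) < rep.top (p.getVert (k + 1)))

lemma oriented_or_swap_oriented (hord : OrderedWalk G p) (s : Bool) :
    rep.Oriented p s ∨ rep.swap.Oriented p s := by
  have key := iff_iff_iff_zero_of_alternating (L := p.length)
    (P := fun k => (p.getVert k).isLeft = s)
    (Q := fun k => rep.top (p.getVert k) < rep.top (p.getVert (k + 1)))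
    (fun k hk => rep.isLeft_getVert_succ (p := p) (by omega) s)
    (fun k hk => rep.top_getVert_succ_lt_iff hord (k := k) (by omega))
  by_cases h₀ : (p.getVert 0).isLeft = s ↔ rep.top (p.getVert 0) < rep.top (p.getVert 1)
  · exact .inl fun k hk => (key k hk).2 h₀
  · refine .inr fun k hk => ?_
    have hadj := p.adj_getVert_succ hk
    rw [top_swap, ← rep.top_lt_iff_bot_lt_of_adj hadj.symm,
      ← rep.not_top_lt_top_iff_of_adj hadj]
    have := key k hk
    tauto

variable {rep}

lemma Oriented.edge_of_isLeft_eq (ho : rep.Oriented p s) (hk : k < p.length)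
    (hA : (p.getVert k).isLeft = s) :
    rep.top (p.getVert k) < rep.top (p.getVert (k + 1)) ∧
      rep.bot (p.getVert (k + 1)) < rep.bot (p.getVert k) := by
  have h := (ho k hk).1 hA
  exact ⟨h, (rep.top_lt_iff_bot_lt_of_adj (p.adj_getVert_succ hk)).1 h⟩

lemma Oriented.edge_of_isLeft_ne (ho : rep.Oriented p s) (hk : k < p.length)
    (hA : (p.getVert k).isLeft ≠ s) :
    rep.top (p.getVert (k + 1)) < rep.top (p.getVert k) ∧
      rep.bot (p.getVert k) < rep.bot (p.getVert (k + 1)) := by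
  have hadj := p.adj_getVert_succ hk
  have h := (rep.not_top_lt_top_iff_of_adj hadj).1 (mt (ho k hk).2 hA)
  exact ⟨h, (rep.top_lt_iff_bot_lt_of_adj hadj.symm).1 h⟩

lemma Oriented.not_leftOf_of_between (ho : rep.Oriented p s) (hk : k + 2 ≤ p.length)
    (hA : (p.getVert k).isLeft = s) {y : Fin n ⊕ Fin m} (h₀ : rep.LeftOf (p.getVert k) y)
    (h₂ : rep.LeftOf y (p.getVert (k + 2))) :
    ¬ rep.LeftOf y (p.getVert (k + 1)) ∧ ¬ rep.LeftOf (p.getVert (k + 1)) y := by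
  have e₀ := ho.edge_of_isLeft_eq (by omega) hA
  have e₁ := ho.edge_of_isLeft_ne (k := k + 1) (by omega)
    fun h => (rep.isLeft_getVert_succ (p := p) (by omega) s).1 h hA
  exact ⟨fun h => by linarith [h.2, e₀.2, h₀.2], fun h => by linarith [h.1, e₁.1, h₂.1]⟩

lemma Oriented.adj_getVert_of_adj_getVert_add_two (hord : OrderedWalk G p)
    (ho : rep.Oriented p c.isLeft) (hc : c ∉ p.support) (hk : k + 2 ≤ p.length)
    (hA : (p.getVert (k + 1)).isLeft = c.isLeft) (hlt : rep.LeftOf c (p.getVert (k + 1)))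
    (hadj : G.Adj c (p.getVert (k + 2))) : G.Adj c (p.getVert k) := by
  have e₀ := ho.edge_of_isLeft_ne (k := k) (by omega)
    fun h => (rep.isLeft_getVert_succ (p := p) (by omega) _).1 hA h
  have e₁ := ho.edge_of_isLeft_eq (k := k + 1) (by omega) hA
  have hkk := rep.leftOf_getVert_add_two hord hk
  have hc₂ := ((rep.adj_iff_not_leftOf (Walk.ne_getVert_of_notMem hc _)).1 hadj).1
  have hbot : rep.bot (p.getVert (k + 2)) ≤ rep.bot c :=
    not_lt.1 fun h => hc₂ ⟨by linarith [hlt.1, e₁.1], h⟩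
  rw [rep.adj_iff_not_leftOf (Walk.ne_getVert_of_notMem hc _)]
  exact ⟨fun h => by linarith [h.2, hkk.2], fun h => by linarith [h.1, hlt.1, e₀.1]⟩

lemma Oriented.adj_getVert_add_two_of_adj_getVert (hord : OrderedWalk G p)
    (ho : rep.Oriented p c.isLeft) (hc : c ∉ p.support) (hk : k + 2 ≤ p.length)
    (hA : (p.getVert (k + 1)).isLeft = c.isLeft) (hlt : rep.LeftOf (p.getVert (k + 1)) c)
    (hadj : G.Adj c (p.getVert k)) : G.Adj c (p.getVert (k + 2)) := by
  have e₀ := ho.edge_of_isLeft_ne (k := k) (by omega)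
    fun h => (rep.isLeft_getVert_succ (p := p) (by omega) _).1 hA h
  have e₁ := ho.edge_of_isLeft_eq (k := k + 1) (by omega) hA
  have hkk := rep.leftOf_getVert_add_two hord hk
  have hc₀ := ((rep.adj_iff_not_leftOf (Walk.ne_getVert_of_notMem hc _)).1 hadj).2
  have htop : rep.top c ≤ rep.top (p.getVert k) :=
    not_lt.1 fun h => hc₀ ⟨h, by linarith [hlt.2, e₀.2]⟩
  rw [rep.adj_iff_not_leftOf (Walk.ne_getVert_of_notMem hc _)]
  exact ⟨fun h => by linarith [h.2, hlt.2, e₁.2], fun h => by linarith [h.1, hkk.1]⟩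

lemma Oriented.exists_getVert_leftOf_of_adj (hord : OrderedWalk G p)
    (ho : rep.Oriented p c.isLeft) (hc : c ∉ p.support) (h₀ : ¬ G.Adj c (p.getVert 0))
    (h₁ : ¬ G.Adj c (p.getVert 1)) (hk : k ≤ p.length) (hadj : G.Adj c (p.getVert k)) :
    ∃ a < k, (p.getVert a).isLeft = c.isLeft ∧ rep.LeftOf (p.getVert a) c := by
  induction k using Nat.strong_induction_on with
  | _ k ih =>
  obtain _ | _ | k := k
  · exact absurd hadj h₀
  · exact absurd hadj h₁
  have hA : (p.getVert (k + 1)).isLeft = c.isLeft := by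
    have := (rep.isLeft_getVert_succ (p := p) (k := k + 1) hk c.isLeft).not
    have := rep.isLeft_ne_of_adj hadj
    tauto
  rcases rep.leftOf_or_leftOf_of_isLeft_eq hA (Walk.ne_getVert_of_notMem hc _).symm with h | h
  · exact ⟨k + 1, by omega, hA, h⟩
  · obtain ⟨a, ha, h⟩ := ih k (by omega) (by omega)
      (ho.adj_getVert_of_adj_getVert_add_two hord hc hk hA h hadj)
    exact ⟨a, by omega, h⟩

lemma Oriented.exists_leftOf_getVert_of_adj (hord : OrderedWalk G p)
    (ho : rep.Oriented p c.isLeft) (hc : c ∉ p.support)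
    (hL₁ : ¬ G.Adj c (p.getVert (p.length - 1))) (hL : ¬ G.Adj c (p.getVert p.length))
    (hk : k ≤ p.length) (hadj : G.Adj c (p.getVert k)) :
    ∃ a ≤ p.length, k < a ∧ (p.getVert a).isLeft = c.isLeft ∧
      rep.LeftOf c (p.getVert a) := by
  obtain ⟨i, hi⟩ : ∃ i, p.length = k + i := ⟨p.length - k, by omega⟩
  induction i using Nat.strong_induction_on generalizing k with
  | _ i ih =>
  obtain _ | _ | i := i
  · exact absurd (by simpa [hi] using hadj) hL
  · exact absurd (by simpa [hi] using hadj) hL₁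
  have hA : (p.getVert (k + 1)).isLeft = c.isLeft := by
    have := (rep.isLeft_getVert_succ (p := p) (k := k) (by omega) c.isLeft)
    have := rep.isLeft_ne_of_adj hadj
    tauto
  rcases rep.leftOf_or_leftOf_of_isLeft_eq hA (Walk.ne_getVert_of_notMem hc _).symm with h | h
  · obtain ⟨a, ha, hka, h⟩ := ih i (by omega) (by omega)
      (ho.adj_getVert_add_two_of_adj_getVert hord hc (by omega) hA h hadj) (by omega)
    exact ⟨a, ha, by omega, h⟩
  · exact ⟨k + 1, by omega, by omega, hA, h⟩

lemma exists_getVert_leftOf_leftOf_getVert_add_two (rep : LineRep n m G) (hc : c ∉ p.support)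
    {a b : ℕ} (hab : a < b) (hb : b ≤ p.length)
    (hA : (p.getVert a).isLeft = c.isLeft) (hB : (p.getVert b).isLeft = c.isLeft)
    (ha : rep.LeftOf (p.getVert a) c) (hb' : rep.LeftOf c (p.getVert b)) :
    ∃ l, l + 2 ≤ p.length ∧ (p.getVert l).isLeft = c.isLeft ∧
      rep.LeftOf (p.getVert l) c ∧ rep.LeftOf c (p.getVert (l + 2)) := by
  obtain ⟨i, rfl⟩ : ∃ i, b = a + i := ⟨b - a, by omega⟩
  induction i using Nat.strong_induction_on generalizing a with
  | _ i ih =>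
  have hi : 2 ≤ i := by
    by_contra hi
    obtain rfl : i = 1 := by omega
    exact (rep.isLeft_getVert_succ (p := p) (k := a) (by omega) c.isLeft).1 hB hA
  have hA₂ : (p.getVert (a + 2)).isLeft = c.isLeft :=
    (rep.isLeft_getVert_add_two (by omega)).trans hA
  have hb₂ : a + 2 + (i - 2) = a + i := by omega
  rcases rep.leftOf_or_leftOf_of_isLeft_eq hA₂ (Walk.ne_getVert_of_notMem hc _).symm with h | h
  · rcases hi.eq_or_lt with rfl | hi
    · exact absurd hb' h.not_leftOf
    · exact ih (i - 2) (by omega) hA₂ h (by omega) (by omega) (hb₂ ▸ hB) (hb₂ ▸ hb')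
  · exact ⟨a, by omega, hA, ha, h⟩

lemma Oriented.not_leftOf_getVert_add_two (hp : IsLongestPath G p)
    (ho : rep.Oriented p c.isLeft) (hc : c ∉ p.support) (hd : d ∉ p.support) (hcd : G.Adj c d)
    {l : ℕ} (hl : l + 2 ≤ p.length) (hA : (p.getVert l).isLeft = c.isLeft)
    (hlo : rep.LeftOf (p.getVert l) c) : ¬ rep.LeftOf c (p.getVert (l + 2)) := by
  intro hhi
  have hc₁ : G.Adj c (p.getVert (l + 1)) :=
    (rep.adj_iff_not_leftOf (Walk.ne_getVert_of_notMem hc _)).2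
      (ho.not_leftOf_of_between hl hA hlo hhi)
  have hd₀ : ¬ G.Adj d (p.getVert l) := fun h =>
    hp.not_adj_getVert_succ hd hc hcd.symm (by omega) h.symm hc₁
  have hd₂ : ¬ G.Adj d (p.getVert (l + 2)) :=
    hp.not_adj_getVert_succ hc hd hcd (by omega) hc₁.symm
  have hcd' := (rep.adj_iff_not_leftOf hcd.ne).1 hcd
  have h₀ : rep.LeftOf (p.getVert l) d :=
    (rep.leftOf_or_leftOf_of_not_adj (Walk.ne_getVert_of_notMem hd _) hd₀).resolve_left
      fun h => hcd'.2 (h.trans hlo)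
  have h₂ : rep.LeftOf d (p.getVert (l + 2)) :=
    (rep.leftOf_or_leftOf_of_not_adj (Walk.ne_getVert_of_notMem hd _) hd₂).resolve_right
      fun h => hcd'.1 (hhi.trans h)
  have := ho.not_leftOf_of_between hl hA h₀ h₂
  have := rep.leftOf_or_leftOf_of_isLeft_eq (rep.isLeft_eq_of_adj_of_adj hcd hc₁)
    (Walk.ne_getVert_of_notMem hd _)
  tauto

theorem Oriented.not_adj_of_isLongestPath (hp : IsLongestPath G p) (hord : OrderedWalk G p)
    (ho : rep.Oriented p c.isLeft) (hc : c ∉ p.support) (hd : d ∉ p.support) (hcd : G.Adj c d)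
    {z : Fin n ⊕ Fin m} (hz : z ∈ p.support) : ¬ G.Adj c z := by
  intro hcz
  obtain ⟨k, rfl, hk⟩ := Walk.mem_support_iff_exists_getVert.1 hz
  obtain ⟨a, hak, hA, ha⟩ := ho.exists_getVert_leftOf_of_adj hord hc
    (by simpa using hp.not_adj_start hc) (hp.not_adj_getVert_one hc hd hcd.symm) hk hcz
  obtain ⟨b, hb, hkb, hB, hb'⟩ := ho.exists_leftOf_getVert_of_adj hord hc
    (hp.not_adj_getVert_length_sub_one hc hd hcd.symm) (by simpa using hp.not_adj_end hc) hk hcz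
  obtain ⟨l, hl, hlA, hlo, hhi⟩ :=
    rep.exists_getVert_leftOf_leftOf_getVert_add_two hc (hak.trans hkb) hb hA hB ha hb'
  exact ho.not_leftOf_getVert_add_two hp hc hd hcd hl hlA hlo hhi

end LineRep

/-- In a finite connected bipartite permutation graph, for every edge `vw` with `v ∈ X`
and `w ∈ Y`, every ordered longest path contains `v` or `w`. -/
theorem ordered_longest_path_meets_edge {n m : ℕ} (G : SimpleGraph (Fin n ⊕ Fin m))
    (rep : LineRep n m G) (hconn : G.Connected) (i : Fin n) (j : Fin m)
    (hvw : G.Adj (Sum.inl i) (Sum.inr j))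
    ⦃u v : Fin n ⊕ Fin m⦄ (p : G.Walk u v)
    (hlong : IsLongestPath G p) (hord : OrderedWalk G p) :
    Sum.inl i ∈ p.support ∨ Sum.inr j ∈ p.support := by
  by_contra! hmiss
  obtain ⟨W⟩ := hconn.preconnected (Sum.inr j) u
  obtain ⟨d, c, hd, hc, hdc, z, hz, hcz⟩ := W.exists_adj_adj_mem_of_notMem
    (s := {z | z ∈ p.support}) hmiss.2 p.start_mem_support hmiss.1 hvw
  rcases rep.oriented_or_swap_oriented hord c.isLeft with ho | ho <;>
    exact ho.not_adj_of_isLongestPath hlong hord hc hd hdc.symm hz hcz
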